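/- Let $A$ be a Banach algebra and $\mathcal{B}\subset A$ a subalgebra complete in a norm $\|b\|_{\mathcal{B}} = \|b\|_A + N(b)$ where $N$ satisfies $N(bb')\le N(b)\|b'\|_A + \|b\|_A N(b') + N(b)N(b')$ (e.g. $N(b)=\|[P,b]\|_{S^m}$ for a derivation-type seminorm). If $b\in\mathcal{B}$ is invertible in $A$ (in the unitization), then $b^{-1}\in\mathcal{B}$; hence $\mathcal{B}$ is holomorphically closed (spectrally invariant) in $A$. -/

import Mathlib

/-!
Since `[P, b⁻¹] = -b⁻¹ [P, b] b⁻¹`, the commutator of the inverse lies in the two-sided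
ideal `S` whenever `[P, b]` does, and the left and right module bounds for `nS` give
`nS [P, b⁻¹] ≤ ‖b⁻¹‖ nS [P, b] ‖b⁻¹‖`.
-/

theorem commutator_inverse_eq {R : Type*} [Ring R] {p b c : R} (hbc : b * c = 1)
    (hcb : c * b = 1) : p * c - c * p = -(c * (p * b - b * p) * c) := by
  have hc : c * (p * b - b * p) * c = c * p - p * c := by
    calc c * (p * b - b * p) * c = c * p * (b * c) - (c * b) * p * c := by noncomm_ring
      _ = c * p - p * c := by rw [hbc, hcb, mul_one, one_mul]
  rw [hc, neg_sub]

section IdealSeminorm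

variable {R : Type*} [SeminormedRing R] (S : Set R) (nS : R → ℝ)

theorem seminorm_mul_mul_le (hSl : ∀ A T, T ∈ S → A * T ∈ S)
    (hnSl : ∀ A T, T ∈ S → nS (A * T) ≤ ‖A‖ * nS T)
    (hnSr : ∀ A T, T ∈ S → nS (T * A) ≤ nS T * ‖A‖) (a c : R) {T : R} (hT : T ∈ S) :
    nS (a * T * c) ≤ ‖a‖ * nS T * ‖c‖ :=
  calc nS (a * T * c) ≤ nS (a * T) * ‖c‖ := hnSr c _ (hSl a T hT)
    _ ≤ ‖a‖ * nS T * ‖c‖ := by gcongr; exact hnSl a T hT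

theorem commutator_inverse_mem_and_seminorm_le (hSneg : ∀ T, T ∈ S → -T ∈ S)
    (hSl : ∀ A T, T ∈ S → A * T ∈ S) (hSr : ∀ A T, T ∈ S → T * A ∈ S)
    (hnSneg : ∀ T, nS (-T) = nS T)
    (hnSl : ∀ A T, T ∈ S → nS (A * T) ≤ ‖A‖ * nS T)
    (hnSr : ∀ A T, T ∈ S → nS (T * A) ≤ nS T * ‖A‖)
    {p b c : R} (hb : p * b - b * p ∈ S) (hbc : b * c = 1) (hcb : c * b = 1) :
    p * c - c * p ∈ S ∧ nS (p * c - c * p) ≤ ‖c‖ ^ 2 * nS (p * b - b * p) := by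
  rw [commutator_inverse_eq hbc hcb, hnSneg]
  refine ⟨hSneg _ (hSr c _ (hSl c _ hb)), ?_⟩
  calc nS (c * (p * b - b * p) * c) ≤ ‖c‖ * nS (p * b - b * p) * ‖c‖ :=
        seminorm_mul_mul_le S nS hSl hnSl hnSr c c hb
    _ = ‖c‖ ^ 2 * nS (p * b - b * p) := by ring

end IdealSeminorm

theorem stmt18_general {H : Type*} [NormedAddCommGroup H] [InnerProductSpace ℂ H]
    (P : H →L[ℂ] H)
    (S : Set (H →L[ℂ] H)) (nS : (H →L[ℂ] H) → ℝ)
    (hSneg : ∀ T, T ∈ S → -T ∈ S)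
    (hSl : ∀ (A : H →L[ℂ] H) T, T ∈ S → A ∘L T ∈ S)
    (hSr : ∀ (A : H →L[ℂ] H) T, T ∈ S → T ∘L A ∈ S)
    (hnSneg : ∀ T, nS (-T) = nS T)
    (hnSl : ∀ (A : H →L[ℂ] H) T, T ∈ S → nS (A ∘L T) ≤ ‖A‖ * nS T)
    (hnSr : ∀ (A : H →L[ℂ] H) T, T ∈ S → nS (T ∘L A) ≤ nS T * ‖A‖)
    (b binv : H →L[ℂ] H)
    (hb : P ∘L b - b ∘L P ∈ S)
    (hinv1 : b ∘L binv = ContinuousLinearMap.id ℂ H)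
    (hinv2 : binv ∘L b = ContinuousLinearMap.id ℂ H) :
    (P ∘L binv - binv ∘L P ∈ S) ∧
    nS (P ∘L binv - binv ∘L P) ≤ ‖binv‖ ^ 2 * nS (P ∘L b - b ∘L P) :=
  -- `∘L` and `ContinuousLinearMap.id` are definitionally `*` and `1` of the ring `H →L[ℂ] H`.
  commutator_inverse_mem_and_seminorm_le S nS hSneg hSl hSr hnSneg hnSl hnSr hb hinv1 hinv2

/-- spectral invariance of the subalgebra `𝓑 = {b : [P,b] ∈ Sᵐ}` of the
bounded operators on a Hilbert space `H` (the concrete case permitted by the context),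
where `P` is an orthogonal projection and `Sᵐ` the Schatten ideal, axiomatised as an
operator ideal `S` with norm `nS`.  If `b ∈ 𝓑` is invertible (with inverse `binv`),
then `binv ∈ 𝓑`, with `nS([P, b⁻¹]) ≤ ‖b⁻¹‖² nS([P,b])` (from
`[P,b⁻¹] = -b⁻¹[P,b]b⁻¹`); hence `𝓑` is holomorphically closed (spectrally
invariant). -/
theorem stmt18 {H : Type*} [NormedAddCommGroup H] [InnerProductSpace ℂ H]
    [CompleteSpace H]
    (P : H →L[ℂ] H) (hP1 : P ∘L P = P) (hP2 : IsSelfAdjoint P)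
    (m : ℕ) (hm : 1 ≤ m)
    (S : Set (H →L[ℂ] H)) (nS : (H →L[ℂ] H) → ℝ)
    (hS0 : (0 : H →L[ℂ] H) ∈ S)
    (hSadd : ∀ T T', T ∈ S → T' ∈ S → T + T' ∈ S)
    (hSneg : ∀ T, T ∈ S → -T ∈ S)
    (hSl : ∀ (A : H →L[ℂ] H) T, T ∈ S → A ∘L T ∈ S)
    (hSr : ∀ (A : H →L[ℂ] H) T, T ∈ S → T ∘L A ∈ S)
    (hnS0 : ∀ T, 0 ≤ nS T)
    (hnSneg : ∀ T, nS (-T) = nS T)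
    (hnSl : ∀ (A : H →L[ℂ] H) T, T ∈ S → nS (A ∘L T) ≤ ‖A‖ * nS T)
    (hnSr : ∀ (A : H →L[ℂ] H) T, T ∈ S → nS (T ∘L A) ≤ nS T * ‖A‖)
    (b binv : H →L[ℂ] H)
    (hb : P ∘L b - b ∘L P ∈ S)
    (hinv1 : b ∘L binv = ContinuousLinearMap.id ℂ H)
    (hinv2 : binv ∘L b = ContinuousLinearMap.id ℂ H) :
    (P ∘L binv - binv ∘L P ∈ S) ∧
    nS (P ∘L binv - binv ∘L P) ≤ ‖binv‖ ^ 2 * nS (P ∘L b - b ∘L P) :=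
  stmt18_general P S nS hSneg hSl hSr hnSneg hnSl hnSr b binv hb hinv1 hinv2
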